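/- Let X be a real Banach space, let A: X ⇉ X* be a maximally monotone linear relation, and let f: X → (−∞,+∞] be a proper lower semicontinuous convex function with 0 ∈ dom A ∩ int dom ∂f and (0,0) ∈ gra A ∩ gra ∂f. If (z, z*) ∈ X × X* satisfies F_{A+∂f}(z, z*) < ⟨z, z*⟩, then z lies in the norm closure of dom A but z ∉ dom A. -/

import Mathlib

open NormedSpace Set Pointwise

variable {X : Type*} [NormedAddCommGroup X] [NormedSpace ℝ X]

/-- The graph of a set-valued operator `A : X ⇉ X*`. -/
def gra (A : X → Set (StrongDual ℝ X)) : Set (X × StrongDual ℝ X) := {p | p.2 ∈ A p.1}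

/-- The domain of a set-valued operator. -/
def domOp (A : X → Set (StrongDual ℝ X)) : Set X := {x | (A x).Nonempty}

/-- `A` is a monotone operator. -/
def IsMonotoneOp (A : X → Set (StrongDual ℝ X)) : Prop :=
  ∀ p ∈ gra A, ∀ q ∈ gra A, 0 ≤ (p.2 - q.2) (p.1 - q.1)

/-- `A` is maximally monotone: it is monotone and has no proper monotone extension. -/
def IsMaxMonotoneOp (A : X → Set (StrongDual ℝ X)) : Prop :=
  IsMonotoneOp A ∧
    ∀ B : X → Set (StrongDual ℝ X), IsMonotoneOp B → gra A ⊆ gra B → gra B = gra A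

/-- `A` is a linear relation: its graph is a linear subspace of `X × X*`. -/
def IsLinearRelation (A : X → Set (StrongDual ℝ X)) : Prop :=
  ∃ S : Submodule ℝ (X × StrongDual ℝ X), (S : Set (X × StrongDual ℝ X)) = gra A

/-- The pointwise (Minkowski) sum of two set-valued operators. -/
def opSum (A B : X → Set (StrongDual ℝ X)) : X → Set (StrongDual ℝ X) := fun x => A x + B x

/-- Effective domain of an extended-real-valued function. -/
def fdom (f : X → EReal) : Set X := {x | f x ≠ ⊤}

/-- `f` is proper: not identically `+∞` and never `-∞`. -/
def EProper (f : X → EReal) : Prop := (∃ x, f x ≠ ⊤) ∧ ∀ x, f x ≠ ⊥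

/-- Convexity of an extended-real-valued function. -/
def EConvex (f : X → EReal) : Prop :=
  ∀ x y : X, ∀ t : ℝ, 0 ≤ t → t ≤ 1 →
    f (t • x + (1 - t) • y) ≤ (t : EReal) * f x + ((1 - t : ℝ) : EReal) * f y

/-- The subdifferential of `f`. -/
def subdiff (f : X → EReal) : X → Set (StrongDual ℝ X) :=
  fun x => {xs | ∀ y : X, ((xs (y - x) : ℝ) : EReal) + f x ≤ f y}

/-- The Fitzpatrick function of a set-valued operator. -/
noncomputable def fitz (A : X → Set (StrongDual ℝ X)) : X × StrongDual ℝ X → EReal :=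
  fun p => ⨆ q ∈ gra A, ((p.2 q.1 + q.2 p.1 - q.2 q.1 : ℝ) : EReal)

/-- `(x,x*)` is monotonically related to a set `G ⊆ X × X*`. -/
def MonRel (p : X × StrongDual ℝ X) (G : Set (X × StrongDual ℝ X)) : Prop :=
  ∀ q ∈ G, 0 ≤ (p.2 - q.2) (p.1 - q.1)

/-- A maximally monotone operator is of type (FPV). -/
def IsFPVOp (A : X → Set (StrongDual ℝ X)) : Prop :=
  IsMaxMonotoneOp A ∧
    ∀ U : Set X, IsOpen U → Convex ℝ U → (U ∩ domOp A).Nonempty →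
      ∀ p : X × StrongDual ℝ X, p.1 ∈ U →
        MonRel p (gra A ∩ U ×ˢ (univ : Set (StrongDual ℝ X))) → p ∈ gra A

/-- The normal cone operator of a set `C`. -/
def normalCone (C : Set X) : X → Set (StrongDual ℝ X) :=
  fun x => {xs | x ∈ C ∧ ∀ c ∈ C, xs (c - x) ≤ 0}

/-!
Let `ε > 0` bound `⟨z - b, z* - b*⟩` from below on `gra (A + ∂f)`; this is what
`F_{A+∂f}(z, z*) < ⟨z, z*⟩` says. If `z ∉ closure (dom A)`, a functional `g` vanishing on the
subspace `dom A` with `g z ≠ 0` gives `(0, s • g) ∈ gra A` for every `s` by maximality, and the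
bound fails for a suitable `s`.

If `(z, a*) ∈ gra A`, then `(t • z, t • a*) ∈ gra A` by linearity, and the bound at
`(t • z, t • a* + b*)` with `b* ∈ ∂f (t • z)` reads `ε ≤ (1 - t) (⟨z, z*⟩ - t ⟨z, a*⟩ - ⟨z, b*⟩)`.
So `z ∉ int dom f`, and `⟨z, b*⟩` stays bounded while `t • z` runs through `int dom f`. Let
`t₀ • z` be the point where the segment leaves `int dom f`. The bounded slopes make `f (t₀ • z)`
finite and put a segment below the graph of `f` ending there, so separating it from the epigraph
gives a subgradient at `t₀ • z`. Adding large multiples of a normal vector to `dom f` at `t₀ • z`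
produces `b* ∈ ∂f (t₀ • z)` with `⟨z, b*⟩` as large as we like, contradicting the bound at `t₀`.
-/

open Metric Filter Topology

theorem geometric_hahn_banach_of_nonempty_interior_strict {E : Type*} [NormedAddCommGroup E]
    [NormedSpace ℝ E] {s t : Set E} (hs : Convex ℝ s) (ht : Convex ℝ t)
    (hs₀ : (interior s).Nonempty) (hst : Disjoint (interior s) t) :
    ∃ (F : StrongDual ℝ E) (u : ℝ),
      (∀ a ∈ interior s, F a < u) ∧ (∀ a ∈ s, F a ≤ u) ∧ ∀ b ∈ t, u ≤ F b := by
  obtain ⟨F, u, hlt, hle⟩ := geometric_hahn_banach_open hs.interior isOpen_interior ht hst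
  have hcl : closure (interior s) ⊆ {a | F a ≤ u} :=
    closure_minimal (fun a ha => (hlt a ha).le) (isClosed_le F.continuous continuous_const)
  rw [hs.closure_interior_eq_closure_of_nonempty_interior hs₀] at hcl
  exact ⟨F, u, hlt, fun a ha => hcl (subset_closure ha), hle⟩

theorem Submodule.exists_dual_eq_zero_of_notMem_closure {E : Type*} [NormedAddCommGroup E]
    [NormedSpace ℝ E] (D : Submodule ℝ E) {x : E} (hx : x ∉ closure (D : Set E)) :
    ∃ g : StrongDual ℝ E, g x ≠ 0 ∧ ∀ a ∈ D, g a = 0 := by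
  rw [← D.topologicalClosure_coe] at hx
  obtain ⟨g, u, hgD, hgx⟩ := geometric_hahn_banach_closed_point
    D.topologicalClosure.convex D.isClosed_topologicalClosure hx
  have hzero : ∀ a ∈ D.topologicalClosure, g a = 0 := by
    intro a ha
    by_contra hne
    have := hgD _ (D.topologicalClosure.smul_mem (u / g a) ha)
    rw [map_smul, smul_eq_mul, div_mul_cancel₀ _ hne] at this
    exact lt_irrefl _ this
  have hu : 0 < u := by simpa using hgD 0 D.topologicalClosure.zero_mem
  exact ⟨g, (hu.trans hgx).ne', fun a ha => hzero a (D.le_topologicalClosure ha)⟩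

theorem exists_smul_notMem_forall_lt {Ω : Set X} (hΩ : IsOpen Ω) (h0 : (0 : X) ∈ Ω) {z : X}
    (hz : z ∉ Ω) : ∃ t₀ ∈ Ioc (0 : ℝ) 1, t₀ • z ∉ Ω ∧ ∀ t ∈ Ico 0 t₀, t • z ∈ Ω := by
  let T := Icc (0 : ℝ) 1 ∩ (fun t : ℝ => t • z) ⁻¹' Ωᶜ
  have hcont : Continuous fun t : ℝ => t • z := continuous_id.smul continuous_const
  have hT : IsClosed T := isClosed_Icc.inter (hΩ.isClosed_compl.preimage hcont)
  have h1 : (1 : ℝ) ∈ T := ⟨⟨zero_le_one, le_rfl⟩, by simpa using hz⟩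
  have hbdd : BddBelow T := ⟨0, fun t ht => ht.1.1⟩
  have hmem : sInf T ∈ T := hT.csInf_mem ⟨1, h1⟩ hbdd
  have hpos : sInf T ≠ 0 := fun h => hmem.2 (by simpa [h] using h0)
  refine ⟨sInf T, ⟨lt_of_le_of_ne hmem.1.1 hpos.symm, csInf_le hbdd h1⟩, hmem.2,
    fun t ht => ?_⟩
  by_contra htΩ
  exact (csInf_le hbdd ⟨⟨ht.1, (ht.2.trans_le (csInf_le hbdd h1)).le⟩, htΩ⟩).not_gt ht.2

section Operators

variable {A : X → Set (StrongDual ℝ X)}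

theorem IsMaxMonotoneOp.mem_gra_of_monRel (hA : IsMaxMonotoneOp A) {p : X × StrongDual ℝ X}
    (hp : MonRel p (gra A)) : p ∈ gra A := by
  let B : X → Set (StrongDual ℝ X) := fun x => A x ∪ {x' | (x, x') = p}
  have hB : IsMonotoneOp B := by
    rintro q (hq | hq) q' (hq' | hq')
    · exact hA.1 q hq q' hq'
    · have hq' : q' = p := hq'
      subst hq'
      have := hp q hq
      simp only [map_sub, sub_apply] at this ⊢
      linarith
    · have hq : q = p := hq
      subst hq
      exact hp q' hq'
    · have hq : q = p := hq
      have hq' : q' = p := hq'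
      simp [hq, hq']
  have hAB : gra A ⊆ gra B := fun q hq => Or.inl hq
  rw [← hA.2 B hB hAB]
  exact Or.inr rfl

theorem IsMaxMonotoneOp.mem_zero_of_forall_domOp (hA : IsMaxMonotoneOp A)
    (h0 : (0 : StrongDual ℝ X) ∈ A 0) {g : StrongDual ℝ X} (hg : ∀ a ∈ domOp A, g a = 0) :
    g ∈ A 0 :=
  hA.mem_gra_of_monRel (p := (0, g)) fun q hq => by
    have hqD : q.1 ∈ domOp A := ⟨q.2, hq⟩
    simpa [hg _ hqD] using hA.1 q hq (0, 0) h0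

theorem IsLinearRelation.smul_mem (hA : IsLinearRelation A) {x : X} {x' : StrongDual ℝ X}
    (hx : x' ∈ A x) (t : ℝ) : t • x' ∈ A (t • x) := by
  obtain ⟨S, hS⟩ := hA
  have : (x, x') ∈ (S : Set (X × StrongDual ℝ X)) := hS ▸ hx
  exact (hS ▸ S.smul_mem t this : (t • x, t • x') ∈ gra A)

theorem IsLinearRelation.exists_submodule_eq_domOp (hA : IsLinearRelation A) :
    ∃ D : Submodule ℝ X, (D : Set X) = domOp A := by
  obtain ⟨S, hS⟩ := hA
  refine ⟨S.map (LinearMap.fst ℝ X (StrongDual ℝ X)), ?_⟩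
  ext x
  simp only [Submodule.map_coe, mem_image, hS, LinearMap.fst_apply]
  exact ⟨fun ⟨p, hp, hpx⟩ => ⟨p.2, hpx ▸ hp⟩, fun ⟨x', hx'⟩ => ⟨(x, x'), hx', rfl⟩⟩

theorem exists_pos_le_of_fitz_lt {B : X → Set (StrongDual ℝ X)} {z : X} {zs : StrongDual ℝ X}
    (h : fitz B (z, zs) < (zs z : EReal)) :
    ∃ ε > 0, ∀ q ∈ gra B, ε ≤ (zs - q.2) (z - q.1) := by
  obtain ⟨r, hFr, hrz⟩ := EReal.lt_iff_exists_real_btwn.1 h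
  refine ⟨zs z - r, by linarith [EReal.coe_lt_coe_iff.1 hrz], fun q hq => ?_⟩
  have hq : ((zs q.1 + q.2 z - q.2 q.1 : ℝ) : EReal) < r :=
    (le_iSup₂ (f := fun q (_ : q ∈ gra B) => ((zs q.1 + q.2 z - q.2 q.1 : ℝ) : EReal)) q
      hq).trans_lt hFr
  simp only [map_sub, sub_apply]
  linarith [EReal.coe_lt_coe_iff.1 hq]

theorem mem_closure_domOp_of_forall_le (hA : IsMaxMonotoneOp A) (hAlin : IsLinearRelation A)
    (h0A : (0 : StrongDual ℝ X) ∈ A 0) {B : X → Set (StrongDual ℝ X)}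
    (h0B : (0 : StrongDual ℝ X) ∈ B 0) {z : X} {zs : StrongDual ℝ X} {ε : ℝ} (hε : 0 < ε)
    (hgap : ∀ q ∈ gra (opSum A B), ε ≤ (zs - q.2) (z - q.1)) : z ∈ closure (domOp A) := by
  by_contra hz
  obtain ⟨D, hD⟩ := hAlin.exists_submodule_eq_domOp
  obtain ⟨g, hgz, hgD⟩ := D.exists_dual_eq_zero_of_notMem_closure (hD ▸ hz)
  have hsg : (zs z / g z) • g ∈ A 0 :=
    hA.mem_zero_of_forall_domOp h0A fun a ha => by
      simp [hgD a (by rwa [← SetLike.mem_coe, hD])]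
  have := hgap (0, (zs z / g z) • g + 0) (add_mem_add hsg h0B)
  simp only [add_zero, sub_zero, sub_apply, smul_apply, smul_eq_mul, div_mul_cancel₀ _ hgz,
    sub_self] at this
  linarith

end Operators

section ConvexFunction

variable {f : X → EReal}

theorem EConvex.le_coe (hconv : EConvex f) {x y : X} {a b t : ℝ} (ht₀ : 0 ≤ t) (ht₁ : t ≤ 1)
    (hx : f x ≤ a) (hy : f y ≤ b) :
    f (t • x + (1 - t) • y) ≤ ((t * a + (1 - t) * b : ℝ) : EReal) := by
  have ht₁' : (0 : EReal) ≤ ((1 - t : ℝ) : EReal) := EReal.coe_nonneg.2 (by linarith)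
  calc f (t • x + (1 - t) • y) ≤ (t : EReal) * f x + ((1 - t : ℝ) : EReal) * f y :=
        hconv x y t ht₀ ht₁
    _ ≤ (t : EReal) * a + ((1 - t : ℝ) : EReal) * b :=
        add_le_add (mul_le_mul_of_nonneg_left hx (EReal.coe_nonneg.2 ht₀))
          (mul_le_mul_of_nonneg_left hy ht₁')
    _ = _ := by norm_cast

theorem EConvex.convex_fdom (hconv : EConvex f) : Convex ℝ (fdom f) := by
  intro x hx y hy a b ha hb hab
  obtain rfl : b = 1 - a := by linarith
  exact ne_top_of_le_ne_top (EReal.coe_ne_top _)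
    (hconv.le_coe ha (by linarith) (EReal.le_coe_toReal hx) (EReal.le_coe_toReal hy))

theorem domOp_subdiff_subset_fdom (hf : ∃ x, f x ≠ ⊤) : domOp (subdiff f) ⊆ fdom f := by
  rintro x ⟨b, hb⟩ hx
  obtain ⟨y, hy⟩ := hf
  have := hb y
  rw [hx, EReal.coe_add_top, top_le_iff] at this
  exact hy this

theorem mem_subdiff_of_forall_le {b : StrongDual ℝ X} {x : X} {a : ℝ} (hx : f x = a)
    (h : ∀ y (r : ℝ), f y ≤ r → b (y - x) + a ≤ r) : b ∈ subdiff f x := by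
  intro y
  rw [hx, ← EReal.coe_add]
  by_contra hlt
  obtain ⟨r, hyr, hr⟩ := EReal.lt_iff_exists_real_btwn.1 (not_le.1 hlt)
  exact (h y r hyr.le).not_gt (EReal.coe_lt_coe_iff.1 hr)

theorem le_add_of_mem_subdiff {b : StrongDual ℝ X} {x : X} (hb : b ∈ subdiff f x) (y : X) :
    f x ≤ f y + (b (x - y) : ℝ) := by
  have hcancel : (b (y - x) : EReal) + (b (x - y) : ℝ) = 0 := by
    rw [← EReal.coe_add, ← map_add, sub_add_sub_cancel, sub_self, map_zero, EReal.coe_zero]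
  calc f x = (b (y - x) : EReal) + f x + (b (x - y) : ℝ) := by
        rw [add_right_comm, hcancel, zero_add]
    _ ≤ f y + (b (x - y) : ℝ) := add_le_add (hb y) le_rfl

theorem add_mem_subdiff_of_mem_normalCone {b w : StrongDual ℝ X} {x : X}
    (hb : b ∈ subdiff f x) (hw : w ∈ normalCone (fdom f) x) : b + w ∈ subdiff f x := by
  intro y
  by_cases hy : f y = ⊤
  · rw [hy]
    exact le_top
  calc (((b + w) (y - x) : ℝ) : EReal) + f x ≤ (b (y - x) : EReal) + f x := by
        gcongr
        simpa using hw.2 y hy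
    _ ≤ f y := hb y

theorem smul_mem_normalCone {C : Set X} {x : X} {w : StrongDual ℝ X} (hw : w ∈ normalCone C x)
    {t : ℝ} (ht : 0 ≤ t) : t • w ∈ normalCone C x :=
  ⟨hw.1, fun c hc => by simpa using mul_nonpos_of_nonneg_of_nonpos ht (hw.2 c hc)⟩

theorem exists_mem_normalCone_pos {C : Set X} (hC : Convex ℝ C) (h0 : (0 : X) ∈ interior C)
    {x : X} (hx : x ∈ C) (hxC : x ∉ interior C) : ∃ w ∈ normalCone C x, 0 < w x := by
  obtain ⟨w, u, hint, hC, hux⟩ := geometric_hahn_banach_of_nonempty_interior_strict hC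
    (convex_singleton x) ⟨0, h0⟩ (disjoint_singleton_right.2 hxC)
  have hux := hux x rfl
  refine ⟨w, ⟨hx, fun c hc => ?_⟩, ?_⟩
  · simpa [map_sub] using (hC c hc).trans hux
  · simpa using (hint 0 h0).trans_le hux

theorem LowerSemicontinuous.le_of_forall_smul_le (hlsc : LowerSemicontinuous f) {x : X}
    {s : ℝ} {a : EReal} (hs : s < 1) (h : ∀ t ∈ Ioo s 1, f (t • x) ≤ a) : f x ≤ a := by
  have hcont : Continuous fun t : ℝ => t • x := continuous_id.smul continuous_const
  have hlim : Tendsto (fun t : ℝ => t • x) (𝓝[<] 1) (𝓝 x) := by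
    simpa using (hcont.tendsto 1).mono_left nhdsWithin_le_nhds
  exact (hlsc.isClosed_preimage a).mem_of_tendsto hlim (eventually_of_mem (Ioo_mem_nhdsLT hs) h)

def epi (f : X → EReal) : Set (X × ℝ) := {p | f p.1 ≤ p.2}

theorem EConvex.convex_epi (hconv : EConvex f) : Convex ℝ (epi f) := by
  rintro ⟨x, a⟩ hx ⟨y, b⟩ hy s t hs ht hst
  obtain rfl : t = 1 - s := by linarith
  exact hconv.le_coe hs (by linarith) hx hy

theorem mem_interior_epi {E : Type*} [PseudoMetricSpace E] {g : E → EReal} {x : E} {ρ M c : ℝ}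
    (hρ : 0 < ρ) (hM : ∀ y ∈ ball x ρ, g y ≤ M) (hc : M < c) : (x, c) ∈ interior (epi g) := by
  refine interior_maximal ?_ (isOpen_ball.prod isOpen_Ioi) ⟨mem_ball_self hρ, hc⟩
  rintro ⟨y, c'⟩ ⟨hy, hc'⟩
  exact (hM y hy).trans (EReal.coe_le_coe_iff.2 (le_of_lt hc'))

theorem lt_of_mem_interior_epi {E : Type*} [TopologicalSpace E] {g : E → EReal} {p : E × ℝ}
    (hp : p ∈ interior (epi g)) : g p.1 < p.2 := by
  have hev : ∀ᶠ c in 𝓝[<] p.2, (p.1, c) ∈ epi g :=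
    nhdsWithin_le_nhds ((Continuous.prodMk_right p.1).continuousAt.preimage_mem_nhds
      (mem_interior_iff_mem_nhds.1 hp))
  obtain ⟨c, hc, hcp⟩ := (hev.and self_mem_nhdsWithin).exists
  exact hc.trans_lt (EReal.coe_lt_coe_iff.2 hcp)

/-- Separating the segment from the interior of the epigraph cannot produce a vertical
hyperplane, because the endpoint `(y, c)` lies below points of that interior. -/
theorem subdiff_nonempty_of_segment_le (hconv : EConvex f) {x₀ y : X} {F₀ c ρ M : ℝ}
    (hx₀ : f x₀ = F₀) (hρ : 0 < ρ) (hM : ∀ p ∈ ball y ρ, f p ≤ M)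
    (hseg : ∀ p ∈ segment ℝ (x₀, F₀) (y, c), (p.2 : EReal) ≤ f p.1) :
    (subdiff f x₀).Nonempty := by
  have htop : (y, max M c + 1) ∈ interior (epi f) :=
    mem_interior_epi hρ hM (by linarith [le_max_left M c])
  have hdisj : Disjoint (interior (epi f)) (segment ℝ (x₀, F₀) (y, c)) :=
    disjoint_left.2 fun p hp hps => (lt_of_mem_interior_epi hp).not_ge (hseg p hps)
  obtain ⟨F, u, hint, hepi, hsegF⟩ := geometric_hahn_banach_of_nonempty_interior_strict
    hconv.convex_epi (convex_segment _ _) ⟨_, htop⟩ hdisj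
  set w := F.comp (ContinuousLinearMap.inl ℝ X ℝ)
  set α := F (0, 1)
  have hF : ∀ p : X × ℝ, F p = w p.1 + p.2 * α := fun p => by
    rw [show p = (p.1, 0) + p.2 • ((0 : X), (1 : ℝ)) by ext <;> simp, map_add, map_smul]
    simp [w, α]
  have hα : α < 0 := by
    have h := (hint _ htop).trans_le (hsegF _ (right_mem_segment ℝ _ _))
    rw [hF, hF] at h
    nlinarith [le_max_right M c]
  have hx₀F := hsegF _ (left_mem_segment ℝ _ _)
  refine ⟨(-α)⁻¹ • w, mem_subdiff_of_forall_le hx₀ fun q r hqr => ?_⟩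
  have hq := (hepi (q, r) hqr).trans hx₀F
  rw [hF, hF] at hq
  have : (-α)⁻¹ * (w q - w x₀) ≤ r - F₀ := by
    rw [inv_mul_le_iff₀ (by linarith)]
    nlinarith
  show (-α)⁻¹ * w (q - x₀) + F₀ ≤ r
  rw [map_sub]
  linarith

end ConvexFunction

section Banach

variable [CompleteSpace X] {f : X → EReal}

/-- Baire applied to the closed sets `{d | f (x + d) ≤ n ∧ f (x - d) ≤ n}`; the symmetry in `d`
moves the resulting ball back to `x` by a midpoint convexity step. -/
theorem exists_ball_le_of_mem_interior (hconv : EConvex f) (hlsc : LowerSemicontinuous f)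
    {x : X} (hx : x ∈ interior (fdom f)) : ∃ ρ > 0, ∃ M : ℝ, ∀ y ∈ ball x ρ, f y ≤ M := by
  obtain ⟨ρ₁, hρ₁, hball⟩ := Metric.isOpen_iff.1 isOpen_interior x hx
  let C : ℕ → Set X := fun n => {d | f (x + d) ≤ (n : ℝ) ∧ f (x - d) ≤ (n : ℝ)} ∪ (ball 0 ρ₁)ᶜ
  have hC : ∀ n, IsClosed (C n) := fun n =>
    (((hlsc.isClosed_preimage _).preimage (continuous_const.add continuous_id)).inter
      ((hlsc.isClosed_preimage _).preimage (continuous_const.sub continuous_id))).union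
      isOpen_ball.isClosed_compl
  have hcover : ⋃ n, C n = univ := by
    refine eq_univ_of_forall fun d => mem_iUnion.2 ?_
    by_cases hd : d ∈ ball (0 : X) ρ₁
    · have hdom : ∀ y ∈ ball x ρ₁, ∃ n : ℕ, f y ≤ (n : ℝ) := fun y hy =>
        ⟨⌈(f y).toReal⌉₊, (EReal.le_coe_toReal (interior_subset (hball hy))).trans
          (EReal.coe_le_coe_iff.2 (Nat.le_ceil _))⟩
      rw [mem_ball_zero_iff] at hd
      obtain ⟨n₁, hn₁⟩ := hdom (x + d) (by simpa using hd)
      obtain ⟨n₂, hn₂⟩ := hdom (x - d) (by simpa using hd)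
      refine ⟨max n₁ n₂, Or.inl ⟨hn₁.trans ?_, hn₂.trans ?_⟩⟩ <;> exact_mod_cast by omega
    · exact ⟨0, Or.inr hd⟩
  obtain ⟨w, hw, hwC⟩ := (dense_iUnion_interior_of_closed hC hcover).inter_open_nonempty _
    isOpen_ball ⟨0, mem_ball_self hρ₁⟩
  obtain ⟨n, hn⟩ := mem_iUnion.1 hwC
  obtain ⟨ρ, hρ, hsub⟩ := Metric.isOpen_iff.1 (isOpen_interior.inter isOpen_ball) w ⟨hn, hw⟩
  have hbound : ∀ d ∈ ball w ρ, f (x + d) ≤ (n : ℝ) ∧ f (x - d) ≤ (n : ℝ) := fun d hd =>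
    (interior_subset (hsub hd).1).resolve_right (not_not.2 (hsub hd).2)
  refine ⟨ρ, hρ, n, fun y hy => ?_⟩
  have hy' : ‖y - x‖ < ρ := by rwa [← dist_eq_norm]
  have h₁ := (hbound (w + (y - x)) (by simpa [dist_eq_norm] using hy')).1
  have h₂ := (hbound (w - (y - x)) (by simpa [dist_eq_norm] using hy')).2
  have hmid : y = (1 / 2 : ℝ) • (x + (w + (y - x))) + (1 - 1 / 2 : ℝ) • (x - (w - (y - x))) := by
    module
  rw [hmid]
  exact (hconv.le_coe (by norm_num) (by norm_num) h₁ h₂).trans_eq (by congr 1; ring)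

theorem subdiff_nonempty_of_mem_interior (hconv : EConvex f) (hf : ∀ x, f x ≠ ⊥)
    (hlsc : LowerSemicontinuous f) {x : X} (hx : x ∈ interior (fdom f)) :
    (subdiff f x).Nonempty := by
  obtain ⟨ρ, hρ, M, hM⟩ := exists_ball_le_of_mem_interior hconv hlsc hx
  have hfx : f x = (f x).toReal := (EReal.coe_toReal (interior_subset hx) (hf x)).symm
  refine subdiff_nonempty_of_segment_le hconv hfx hρ hM (c := (f x).toReal) fun p hp => ?_
  rw [segment_same, mem_singleton_iff] at hp
  rw [hp, ← hfx]

theorem exists_mem_subdiff_le_apply (hconv : EConvex f) (hf : ∀ x, f x ≠ ⊥)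
    (hlsc : LowerSemicontinuous f) {x₀ : X} {K : ℝ} (hx₀ : x₀ ∉ interior (fdom f))
    (hray : ∀ t ∈ Ico (0 : ℝ) 1, t • x₀ ∈ interior (fdom f))
    (hslope : ∀ t ∈ Ioo (0 : ℝ) 1, ∀ b ∈ subdiff f (t • x₀), b x₀ ≤ K) (L : ℝ) :
    ∃ b ∈ subdiff f x₀, L ≤ b x₀ := by
  set K' := max K 0
  have h0 : (0 : X) ∈ interior (fdom f) := by simpa using hray 0 ⟨le_rfl, one_pos⟩
  have hdrop : ∀ s ∈ Icc (0 : ℝ) 1, f x₀ ≤ f (s • x₀) + ((1 - s) * K' : ℝ) := by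
    rintro s ⟨hs₀, hs₁⟩
    rcases hs₁.eq_or_lt with rfl | hs₁
    · simp
    refine hlsc.le_of_forall_smul_le hs₁ fun t ht => ?_
    obtain ⟨b, hb⟩ := subdiff_nonempty_of_mem_interior hconv hf hlsc
      (hray t ⟨hs₀.trans ht.1.le, ht.2⟩)
    have hbK := hslope t ⟨hs₀.trans_lt ht.1, ht.2⟩ b hb
    refine (le_add_of_mem_subdiff hb (s • x₀)).trans
      (add_le_add le_rfl (EReal.coe_le_coe_iff.2 ?_))
    rw [← sub_smul, map_smul, smul_eq_mul]
    nlinarith [le_max_left K 0, le_max_right K 0, ht.1, ht.2]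
  have hfin : x₀ ∈ fdom f := ne_top_of_le_ne_top
    (EReal.add_ne_top (by rw [zero_smul]; exact interior_subset h0) (EReal.coe_ne_top _))
    (hdrop 0 ⟨le_rfl, zero_le_one⟩)
  set F₀ := (f x₀).toReal
  have hF₀ : f x₀ = F₀ := (EReal.coe_toReal hfin (hf x₀)).symm
  obtain ⟨ρ, hρ, M, hM⟩ := exists_ball_le_of_mem_interior hconv hlsc h0
  obtain ⟨b, hb⟩ : (subdiff f x₀).Nonempty := by
    refine subdiff_nonempty_of_segment_le hconv hF₀ hρ hM (c := F₀ - K') ?_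
    rintro _ ⟨s, θ, hs, hθ, hsθ, rfl⟩
    obtain rfl : θ = 1 - s := by linarith
    have h := hdrop s ⟨hs, by linarith⟩
    rw [hF₀] at h
    have hval : s * F₀ + (1 - s) * (F₀ - K') = F₀ - (1 - s) * K' := by ring
    simp only [Prod.smul_mk, Prod.mk_add_mk, smul_eq_mul, smul_zero, add_zero]
    rwa [hval, EReal.coe_sub,
      EReal.sub_le_iff_le_add (.inl (EReal.coe_ne_bot _)) (.inl (EReal.coe_ne_top _))]
  obtain ⟨w, hw, hwx₀⟩ := exists_mem_normalCone_pos hconv.convex_fdom h0 hfin hx₀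
  set k := max 0 ((L - b x₀) / w x₀)
  refine ⟨b + k • w, add_mem_subdiff_of_mem_normalCone hb (smul_mem_normalCone hw
    (le_max_left _ _)), ?_⟩
  have hk : (L - b x₀) / w x₀ * w x₀ ≤ k * w x₀ :=
    mul_le_mul_of_nonneg_right (le_max_right _ _) hwx₀.le
  rw [div_mul_cancel₀ _ hwx₀.ne'] at hk
  simp only [add_apply, smul_apply, smul_eq_mul]
  linarith

theorem notMem_domOp_of_forall_le {A : X → Set (StrongDual ℝ X)} (hAlin : IsLinearRelation A)
    (hconv : EConvex f) (hf : ∀ x, f x ≠ ⊥) (hlsc : LowerSemicontinuous f)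
    (h0 : (0 : X) ∈ interior (fdom f)) {z : X} {zs : StrongDual ℝ X} {ε : ℝ} (hε : 0 < ε)
    (hgap : ∀ q ∈ gra (opSum A (subdiff f)), ε ≤ (zs - q.2) (z - q.1)) : z ∉ domOp A := by
  rintro ⟨as, has⟩
  have hline : ∀ t : ℝ, ∀ b ∈ subdiff f (t • z), ε ≤ (1 - t) * (zs z - t * as z - b z) := by
    intro t b hb
    have := hgap (t • z, t • as + b) (add_mem_add (hAlin.smul_mem has t) hb)
    simp only [map_sub, map_smul, sub_apply, add_apply, smul_apply,
      smul_eq_mul] at this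
    linarith
  set K := zs z + |as z|
  have habs : ∀ t ∈ Icc (0 : ℝ) 1, -(t * as z) ≤ |as z| := fun t ht => by
    nlinarith [neg_abs_le (as z), le_abs_self (as z), ht.1, ht.2]
  have hslope : ∀ t ∈ Ico (0 : ℝ) 1, ∀ b ∈ subdiff f (t • z), b z ≤ K := by
    rintro t ⟨ht₀, ht₁⟩ b hb
    have h := hε.trans_le (hline t b hb)
    have hpos : 0 < zs z - t * as z - b z := pos_of_mul_pos_right h (by linarith)
    linarith [habs t ⟨ht₀, ht₁.le⟩]
  by_cases hz : z ∈ interior (fdom f)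
  · obtain ⟨b, hb⟩ := subdiff_nonempty_of_mem_interior hconv hf hlsc hz
    have := hline 1 b (by rwa [one_smul])
    linarith [this.trans_eq (by ring : (1 - 1 : ℝ) * (zs z - 1 * as z - b z) = 0)]
  obtain ⟨t₀, ⟨ht₀, ht₀₁⟩, hx₀, hray⟩ := exists_smul_notMem_forall_lt isOpen_interior h0 hz
  obtain ⟨b, hb, hbK⟩ := exists_mem_subdiff_le_apply hconv hf hlsc hx₀ (K := t₀ * K)
    (fun t ht => by rw [smul_smul]; exact hray _ ⟨by nlinarith [ht.1], by nlinarith [ht.2]⟩)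
    (fun t ht b hb => by
      rw [smul_smul] at hb
      rw [map_smul, smul_eq_mul]
      exact mul_le_mul_of_nonneg_left
        (hslope _ ⟨by nlinarith [ht.1], by nlinarith [ht.2]⟩ b hb) ht₀.le)
    (t₀ * K)
  rw [map_smul, smul_eq_mul] at hbK
  have hKb : K ≤ b z := le_of_mul_le_mul_left hbK ht₀
  have := hline t₀ b hb
  nlinarith [habs t₀ ⟨ht₀.le, ht₀₁⟩]

end Banach

/-- If `A` is a maximally monotone linear relation, `f` is proper lsc convex with
`0 ∈ dom A ∩ int dom ∂f` and `(0,0) ∈ gra A ∩ gra ∂f`, and `F_{A+∂f}(z,z*) < ⟨z,z*⟩`,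
then `z ∈ closure (dom A) \ dom A`. -/
theorem mem_closure_dom_diff_dom_of_fitz_lt
    {X : Type*} [NormedAddCommGroup X] [NormedSpace ℝ X] [CompleteSpace X]
    (A : X → Set (StrongDual ℝ X)) (hA : IsMaxMonotoneOp A) (hAlin : IsLinearRelation A)
    (f : X → EReal) (hproper : EProper f) (hconv : EConvex f)
    (hlsc : LowerSemicontinuous f)
    (h0 : (0 : X) ∈ domOp A ∩ interior (domOp (subdiff f)))
    (h0A : (0 : StrongDual ℝ X) ∈ A 0) (h0f : (0 : StrongDual ℝ X) ∈ subdiff f 0)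
    (z : X) (zs : StrongDual ℝ X)
    (hlt : fitz (opSum A (subdiff f)) (z, zs) < ((zs z : ℝ) : EReal)) :
    z ∈ closure (domOp A) ∧ z ∉ domOp A := by
  obtain ⟨ε, hε, hgap⟩ := exists_pos_le_of_fitz_lt hlt
  have h0f' : (0 : X) ∈ interior (fdom f) :=
    interior_mono (domOp_subdiff_subset_fdom hproper.1) h0.2
  exact ⟨mem_closure_domOp_of_forall_le hA hAlin h0A h0f hε hgap,
    notMem_domOp_of_forall_le hAlin hconv hproper.2 hlsc h0f' hε hgap⟩
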